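/- arXiv:1512.09366 — 2 statements merged into one kernel-verified Lean document; each statement's English description precedes it below -/
import Mathlib

section
/- Let s₁₁, s₂₂ be real numbers with s₁₁·s₂₂ < 0 and n₁, n₂ > 0. If −s₁₁n₂² − s₂₂n₁² + ε·2√(|s₁₁s₂₂|)·n₁n₂ = 0 for ε ∈ {1, −1}, then √(|s₁₁|/|s₂₂|) = (√2 + ε·sgn(s₁₁))·(n₁/n₂). -/
/-- Case `s₁₁s₂₂ < 0`: if `−s₁₁n₂² − s₂₂n₁² + ε·2√(|s₁₁s₂₂|)·n₁n₂ = 0` with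
`ε ∈ {1, −1}`, then `√(|s₁₁|/|s₂₂|) = (√2 + ε·sgn(s₁₁))·(n₁/n₂)`. -/
theorem stmt5 (s₁₁ s₂₂ n₁ n₂ ε : ℝ) (hs : s₁₁ * s₂₂ < 0)
    (hn₁ : 0 < n₁) (hn₂ : 0 < n₂) (hε : ε = 1 ∨ ε = -1)
    (heq : -s₁₁ * n₂ ^ 2 - s₂₂ * n₁ ^ 2 + ε * 2 * Real.sqrt |s₁₁ * s₂₂| * n₁ * n₂ = 0) :
    Real.sqrt (|s₁₁| / |s₂₂|) = (Real.sqrt 2 + ε * Real.sign s₁₁) * (n₁ / n₂) := by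
  set A := Real.sqrt |s₁₁| with hAdef
  set B := Real.sqrt |s₂₂| with hBdef
  have hs₁ : s₁₁ ≠ 0 := by rintro rfl; simp at hs
  have hs₂ : s₂₂ ≠ 0 := by rintro rfl; simp at hs
  have hA2 : A ^ 2 = |s₁₁| := Real.sq_sqrt (abs_nonneg _)
  have hB2 : B ^ 2 = |s₂₂| := Real.sq_sqrt (abs_nonneg _)
  have hApos : 0 < A := Real.sqrt_pos.2 (abs_pos.2 hs₁)
  have hBpos : 0 < B := Real.sqrt_pos.2 (abs_pos.2 hs₂)
  have hAB : Real.sqrt |s₁₁ * s₂₂| = A * B := by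
    rw [abs_mul, Real.sqrt_mul (abs_nonneg _)]
  rw [hAB] at heq
  have hε2 : ε ^ 2 = 1 := by rcases hε with h | h <;> rw [h] <;> norm_num
  have hεle : ε ≤ 1 := by rcases hε with h | h <;> rw [h] <;> norm_num
  have hεge : -1 ≤ ε := by rcases hε with h | h <;> rw [h] <;> norm_num
  have h2 : (Real.sqrt 2) ^ 2 = 2 := Real.sq_sqrt (by norm_num)
  have hsqrt2 : 1 < Real.sqrt 2 := by
    nlinarith [Real.sqrt_nonneg 2]
  have hgoal : Real.sqrt (|s₁₁| / |s₂₂|) = A / B := Real.sqrt_div' _ (abs_nonneg _) ▸ by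
    rw [Real.sqrt_div (abs_nonneg _)]
  rcases lt_or_gt_of_ne hs₁ with hneg | hpos
  · -- s₁₁ < 0, so s₂₂ > 0
    have hpos2 : 0 < s₂₂ := by
      rcases lt_or_gt_of_ne hs₂ with h | h
      · nlinarith
      · exact h
    have e1 : A ^ 2 = -s₁₁ := by rw [hA2, abs_of_neg hneg]
    have e2 : B ^ 2 = s₂₂ := by rw [hB2, abs_of_pos hpos2]
    have hsign : Real.sign s₁₁ = -1 := Real.sign_of_neg hneg
    have hfac : (A * n₂ - (Real.sqrt 2 - ε) * (B * n₁)) *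
        (A * n₂ + (Real.sqrt 2 + ε) * (B * n₁)) = 0 := by
      linear_combination n₂ ^ 2 * e1 - n₁ ^ 2 * e2 + heq
        + (B * n₁) ^ 2 * hε2 - (B * n₁) ^ 2 * h2
    have hpos' : 0 < A * n₂ + (Real.sqrt 2 + ε) * (B * n₁) := by
      have : 0 < Real.sqrt 2 + ε := by linarith
      positivity
    have key : A * n₂ = (Real.sqrt 2 - ε) * (B * n₁) := by
      rcases mul_eq_zero.1 hfac with h | h
      · linarith
      · linarith
    rw [hgoal, hsign]
    field_simp
    linear_combination key
  · -- s₁₁ > 0, so s₂₂ < 0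
    have hneg2 : s₂₂ < 0 := by
      rcases lt_or_gt_of_ne hs₂ with h | h
      · exact h
      · nlinarith
    have e1 : A ^ 2 = s₁₁ := by rw [hA2, abs_of_pos hpos]
    have e2 : B ^ 2 = -s₂₂ := by rw [hB2, abs_of_neg hneg2]
    have hsign : Real.sign s₁₁ = 1 := Real.sign_of_pos hpos
    have hfac : (A * n₂ - (Real.sqrt 2 + ε) * (B * n₁)) *
        (A * n₂ + (Real.sqrt 2 - ε) * (B * n₁)) = 0 := by
      linear_combination n₂ ^ 2 * e1 - n₁ ^ 2 * e2 - heq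
        + (B * n₁) ^ 2 * hε2 - (B * n₁) ^ 2 * h2
    have hpos' : 0 < A * n₂ + (Real.sqrt 2 - ε) * (B * n₁) := by
      have : 0 < Real.sqrt 2 - ε := by linarith
      positivity
    have key : A * n₂ = (Real.sqrt 2 + ε) * (B * n₁) := by
      rcases mul_eq_zero.1 hfac with h | h
      · linarith
      · linarith
    rw [hgoal, hsign]
    field_simp
    linear_combination key
end

section
/- For all x, y, z > 0 and u ∈ (0,1] satisfying (1 + x − z)(1 + y − xyu/z) = 4xyu, one has 2√(xyu)/(1 + x + y + xy − xyu) ≤ 1/2, with equality when x = y = z = 1/2 and u = 1. -/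
set_option maxHeartbeats 1600000 in
/-- For all `x, y, z > 0`, `u ∈ (0,1]` satisfying `(1+x−z)(1+y−xyu/z) = 4xyu`,
one has `2√(xyu)/(1+x+y+xy−xyu) ≤ 1/2`, with equality at
`x = y = z = 1/2`, `u = 1`. -/
theorem stmt7 :
    (∀ x y z u : ℝ, 0 < x → 0 < y → 0 < z → 0 < u → u ≤ 1 →
      (1 + x - z) * (1 + y - x * y * u / z) = 4 * (x * y * u) →
      2 * Real.sqrt (x * y * u) / (1 + x + y + x * y - x * y * u) ≤ 1 / 2) ∧
    2 * Real.sqrt ((1/2 : ℝ) * (1/2) * 1) / (1 + 1/2 + 1/2 + (1/2) * (1/2) - (1/2) * (1/2) * 1)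
      = 1 / 2 := by
  constructor
  · intro x y z u hx hy hz hu hu1 hcon
    obtain ⟨s, hsdef⟩ : ∃ s : ℝ, s = Real.sqrt (x * y * u) := ⟨_, rfl⟩
    rw [← hsdef]
    have hxyu : (0:ℝ) < x * y * u := by positivity
    have hs0 : 0 < s := hsdef ▸ Real.sqrt_pos.mpr hxyu
    have hs2 : s ^ 2 = x * y * u := hsdef ▸ Real.sq_sqrt hxyu.le
    have hsy : s ^ 2 ≤ x * y := by nlinarith [mul_pos hx hy]
    -- clear denominators in the constraint
    have hcan : x * y * u / z * z = x * y * u := div_mul_cancel₀ _ hz.ne'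
    have hcon' : (1 + x - z) * (z * (1 + y) - x * y * u) = 4 * (x * y * u) * z := by
      linear_combination z * hcon + (1 + x - z) * hcan
    -- first factor positive
    have hp : 0 < 1 + x - z := by
      rcases lt_or_ge 0 (1 + x - z) with h | h
      · exact h
      · exfalso
        have hprod : 0 < (1 + x - z) * (z * (1 + y) - x * y * u) := by
          rw [hcon']; positivity
        have hq : z * (1 + y) - x * y * u < 0 := by
          by_contra hq
          push_neg at hq
          nlinarith [mul_nonneg hq (neg_nonneg.mpr h)]
        have h1 : (1 + x) * (1 + y) ≤ z * (1 + y) :=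
          mul_le_mul_of_nonneg_right (by linarith) (by linarith)
        nlinarith [mul_pos hx hy, mul_le_mul_of_nonneg_left hu1 (mul_pos hx hy).le]
    -- square roots
    obtain ⟨B, hBdef⟩ : ∃ B : ℝ, B = Real.sqrt (1 + x) := ⟨_, rfl⟩
    obtain ⟨C, hCdef⟩ : ∃ C : ℝ, C = Real.sqrt (1 + y) := ⟨_, rfl⟩
    have hB0 : 0 < B := hBdef ▸ Real.sqrt_pos.mpr (by linarith)
    have hC0 : 0 < C := hCdef ▸ Real.sqrt_pos.mpr (by linarith)
    have hB2 : B ^ 2 = 1 + x := hBdef ▸ Real.sq_sqrt (by linarith)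
    have hC2 : C ^ 2 = 1 + y := hCdef ▸ Real.sq_sqrt (by linarith)
    have hA0 : 0 < B * C := mul_pos hB0 hC0
    -- B*C ≥ 3s
    have hAM : B ^ 2 * s ^ 2 + z ^ 2 * C ^ 2 ≥ 2 * s * (B * C) * z := by
      nlinarith [sq_nonneg (s * B - z * C)]
    have hez : z * ((B * C) ^ 2 - 3 * s ^ 2 - 2 * s * (B * C))
        = B ^ 2 * s ^ 2 + z ^ 2 * C ^ 2 - 2 * s * (B * C) * z
          - ((1 + x) * (x * y * u) + z ^ 2 * (1 + y)
            - (z * ((1 + x) * (1 + y)) + z * (x * y * u) - 4 * (x * y * u) * z)) := by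
      rw [mul_pow, hB2, hC2, hs2]; ring
    have hcz : z * ((B * C) ^ 2 - 3 * s ^ 2 - 2 * s * (B * C)) ≥ 0 := by
      rw [hez]; nlinarith [hAM, hcon']
    have key : (B * C) ^ 2 - 3 * s ^ 2 - 2 * s * (B * C) ≥ 0 := by
      nlinarith [hcz, hz]
    have hA3s : B * C ≥ 3 * s := by
      by_contra h
      push_neg at h
      nlinarith [mul_pos (show (0:ℝ) < 3 * s - B * C by linarith)
        (show (0:ℝ) < B * C + s by linarith)]
    -- B*C ≥ 1 + s
    have hxys : Real.sqrt x * Real.sqrt y ≥ s := by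
      rw [hsdef, ← Real.sqrt_mul hx.le]
      exact Real.sqrt_le_sqrt (by nlinarith [mul_pos hx hy])
    have hx2 : Real.sqrt x ^ 2 = x := Real.sq_sqrt hx.le
    have hy2 : Real.sqrt y ^ 2 = y := Real.sq_sqrt hy.le
    have hxy2s : x + y ≥ 2 * s := by
      nlinarith [sq_nonneg (Real.sqrt x - Real.sqrt y)]
    have hA1s : B * C ≥ 1 + s := by
      have h1 : (B * C) ^ 2 ≥ (1 + s) ^ 2 := by
        rw [mul_pow, hB2, hC2]; nlinarith [hsy]
      nlinarith [hA0, hs0]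
    -- denominator positive, conclude
    have hD : 1 + x + y + x * y - x * y * u = (B * C) ^ 2 - s ^ 2 := by
      rw [mul_pow, hB2, hC2, hs2]; ring
    have hDpos : 0 < 1 + x + y + x * y - x * y * u := by
      rw [hD]; nlinarith [hA1s, hs0]
    rw [div_le_iff₀ hDpos, hD]
    rcases le_total s (1/2) with h | h
    · nlinarith [mul_nonneg (sub_nonneg.mpr hA1s) (by positivity : (0:ℝ) ≤ B * C + 1 + s), hs0]
    · nlinarith [mul_nonneg (sub_nonneg.mpr hA3s) (by positivity : (0:ℝ) ≤ B * C + 3 * s),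
        mul_nonneg hs0.le (by linarith : (0:ℝ) ≤ 2 * s - 1)]
  · have h : Real.sqrt ((1/2 : ℝ) * (1/2) * 1) = 1/2 := by
      rw [show ((1/2 : ℝ) * (1/2) * 1) = (1/2)^2 by norm_num, Real.sqrt_sq (by norm_num)]
    rw [h]; norm_num
end
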